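/- For every integer n, BP(n+1)² − BP(n−1)² = 8·(Q(2n+3)·1 − Q(2n+3)·i − P(2n+3)·j + P(2n+3)·ij). -/

import Mathlib

/-!
Every solution `f` of the Pell recurrence satisfies the addition formula
`f (m + k + 1) = f (m + 1) * P (k + 1) + f m * P k`, since both sides solve the recurrence in `k`
and agree at `k = 0, 1`. Applied to `P` and `Q`, it makes `P (2n+3)` and `Q (2n+3)` quadratic
forms in `P n` and `P (n+1)`. By the multiplication table `i² = j² = -1`, `ij = ji`, so are all
coefficients of `BP (n ± 1)²`, and the claim becomes a polynomial identity in `P n` and `P (n+1)`.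
-/

open scoped TensorProduct

noncomputable def bi : ℂ ⊗[ℝ] ℂ := Complex.I ⊗ₜ[ℝ] 1
noncomputable def bj : ℂ ⊗[ℝ] ℂ := (1 : ℂ) ⊗ₜ[ℝ] Complex.I
noncomputable def bij : ℂ ⊗[ℝ] ℂ := Complex.I ⊗ₜ[ℝ] Complex.I

/-- The bicomplex Pell number `BP n = P n + P (n+1) i + P (n+2) j + P (n+3) ij`. -/
noncomputable def BP (P : ℤ → ℤ) (n : ℤ) : ℂ ⊗[ℝ] ℂ :=
  (P n : ℝ) • (1 : ℂ ⊗[ℝ] ℂ) + (P (n + 1) : ℝ) • bi + (P (n + 2) : ℝ) • bj +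
    (P (n + 3) : ℝ) • bij

section MulTable

open Algebra.TensorProduct TensorProduct

lemma bi_mul_bi : bi * bi = -1 := by simp [bi, tmul_mul_tmul, neg_tmul, one_def]
lemma bj_mul_bj : bj * bj = -1 := by simp [bj, tmul_mul_tmul, tmul_neg, one_def]
lemma bij_mul_bij : bij * bij = 1 := by simp [bij, tmul_mul_tmul, neg_tmul, tmul_neg, one_def]
lemma bi_mul_bj : bi * bj = bij := by simp [bi, bj, bij, tmul_mul_tmul]
lemma bi_mul_bij : bi * bij = -bj := by simp [bi, bj, bij, tmul_mul_tmul, neg_tmul]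
lemma bj_mul_bij : bj * bij = -bi := by simp [bi, bj, bij, tmul_mul_tmul, tmul_neg]

end MulTable

lemma sq_bicomplex (a b c d : ℝ) :
    (a • (1 : ℂ ⊗[ℝ] ℂ) + b • bi + c • bj + d • bij) ^ 2 =
      (a ^ 2 - b ^ 2 - c ^ 2 + d ^ 2) • (1 : ℂ ⊗[ℝ] ℂ) + (2 * a * b - 2 * c * d) • bi +
        (2 * a * c - 2 * b * d) • bj + (2 * a * d + 2 * b * c) • bij := by
  simp only [sq, add_mul, mul_add, smul_mul_smul_comm, mul_comm bj bi, mul_comm bij bi,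
    mul_comm bij bj, bi_mul_bi, bj_mul_bj, bij_mul_bij, bi_mul_bj, bi_mul_bij, bj_mul_bij,
    one_mul, mul_one, smul_neg]
  module

def IsPellRecurrent (f : ℤ → ℤ) : Prop := ∀ n, f (n + 2) = 2 * f (n + 1) + f n

namespace IsPellRecurrent

variable {f g P : ℤ → ℤ}

theorem eq_of_eq_zero_of_eq_one (hf : IsPellRecurrent f) (hg : IsPellRecurrent g)
    (h0 : f 0 = g 0) (h1 : f 1 = g 1) : f = g := by
  suffices h : ∀ n : ℤ, f n = g n ∧ f (n + 1) = g (n + 1) from funext fun n => (h n).1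
  intro n
  induction n using Int.induction_on with
  | zero => exact ⟨h0, h1⟩
  | succ k ih => grind [IsPellRecurrent]
  | pred k ih => grind [IsPellRecurrent]

theorem apply_add_add_one (hf : IsPellRecurrent f) (hP : IsPellRecurrent P) (hP0 : P 0 = 0)
    (hP1 : P 1 = 1) (m k : ℤ) :
    f (m + k + 1) = f (m + 1) * P (k + 1) + f m * P k := by
  refine congrFun (eq_of_eq_zero_of_eq_one (f := fun k ↦ f (m + k + 1))
    (g := fun k ↦ f (m + 1) * P (k + 1) + f m * P k) ?_ ?_ ?_ ?_) k <;>
  grind [IsPellRecurrent]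

end IsPellRecurrent

theorem bicomplexPell_sq_sub_sq (P Q : ℤ → ℤ)
    (hP : ∀ n : ℤ, P (n + 2) = 2 * P (n + 1) + P n) (hP0 : P 0 = 0) (hP1 : P 1 = 1)
    (hQ : ∀ n : ℤ, Q (n + 2) = 2 * Q (n + 1) + Q n) (hQ0 : Q 0 = 2) (hQ1 : Q 1 = 2)
    (n : ℤ) :
    BP P (n + 1) ^ 2 - BP P (n - 1) ^ 2 =
      (8 : ℝ) • ((Q (2 * n + 3) : ℝ) • (1 : ℂ ⊗[ℝ] ℂ) - (Q (2 * n + 3) : ℝ) • bi -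
        (P (2 * n + 3) : ℝ) • bj + (P (2 * n + 3) : ℝ) • bij) := by
  have hQ_odd : Q (2 * n + 3) = 2 * P (2 * n + 3) + 2 * P (2 * n + 2) := by
    have := IsPellRecurrent.apply_add_add_one hQ hP hP0 hP1 0 (2 * n + 2)
    grind
  have hP_odd : P (2 * n + 3) = P (n + 2) * P (n + 2) + P (n + 1) * P (n + 1) := by
    have := IsPellRecurrent.apply_add_add_one hP hP hP0 hP1 (n + 1) (n + 1)
    grind
  have hP_even : P (2 * n + 2) = P (n + 2) * P (n + 1) + P (n + 1) * P n := by
    have := IsPellRecurrent.apply_add_add_one hP hP hP0 hP1 (n + 1) n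
    grind
  have hP_pred : P (n - 1) = P (n + 1) - 2 * P n := by grind
  have hP_add_three : P (n + 3) = 5 * P (n + 1) + 2 * P n := by grind
  have hP_add_four : P (n + 4) = 12 * P (n + 1) + 5 * P n := by grind
  simp only [BP, sq_bicomplex, show n + 1 + 1 = n + 2 by ring, show n + 1 + 2 = n + 3 by ring,
    show n + 1 + 3 = n + 4 by ring, show n - 1 + 1 = n by ring, show n - 1 + 2 = n + 1 by ring,
    show n - 1 + 3 = n + 2 by ring]
  rw [hQ_odd, hP_odd, hP_even, hP_pred, hP_add_three, hP_add_four, hP n]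
  push_cast
  module
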